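/- Let Δ = Δ_u be the unnormalized Laplacian of a d-regular undirected weighted graph (so D = dI and Diag(hΔ + iI) = (hd + i)I), let h > 0, and consider the Jacobi approximation scheme with K = 0 iterations applied to f ∈ ℝⁿ. Then ỹ_j = ((hd + i)^{−1}(hΔ − iI))^j f for every j = 0, …, r, and consequently the approximate Cayley filter f ↦ G̃f = c₀ ỹ₀ + 2 Re Σ_{j=1}^r c_j ỹ_j equals q(Δ) f for some real polynomial q of degree at most r; in particular, every real polynomial of Δ of degree at most r (such as a Chebyshev filter) arises as such a zero-iteration Cayley filter. -/

import Mathlib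

open Matrix Complex Finset

noncomputable section

/-- Degree of vertex `i`: sum of weights of edges incident to `i`. -/
def gDegree {n : ℕ} (W : Matrix (Fin n) (Fin n) ℝ) (i : Fin n) : ℝ :=
  ∑ j ∈ Finset.univ.erase i, W i j

/-- Unnormalized graph Laplacian `Δ_u = D − W`. -/
def unLaplacian {n : ℕ} (W : Matrix (Fin n) (Fin n) ℝ) : Matrix (Fin n) (Fin n) ℝ :=
  Matrix.diagonal (gDegree W) - W

/-- Normalized graph Laplacian `Δ_n = I − D^{-1/2} W D^{-1/2}`. -/
def normLaplacian {n : ℕ} (W : Matrix (Fin n) (Fin n) ℝ) : Matrix (Fin n) (Fin n) ℝ :=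
  1 - Matrix.diagonal (fun i => (Real.sqrt (gDegree W i))⁻¹) * W *
      Matrix.diagonal (fun i => (Real.sqrt (gDegree W i))⁻¹)

/-- Complexification of a real matrix. -/
def cplx {n : ℕ} (Δ : Matrix (Fin n) (Fin n) ℝ) : Matrix (Fin n) (Fin n) ℂ :=
  Δ.map Complex.ofReal

/-- The matrix `hΔ − iI`. -/
def cayleyNum {n : ℕ} (Δ : Matrix (Fin n) (Fin n) ℝ) (hz : ℝ) : Matrix (Fin n) (Fin n) ℂ :=
  (hz : ℂ) • cplx Δ - Complex.I • 1

/-- The matrix `hΔ + iI`. -/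
def cayleyDen {n : ℕ} (Δ : Matrix (Fin n) (Fin n) ℝ) (hz : ℝ) : Matrix (Fin n) (Fin n) ℂ :=
  (hz : ℂ) • cplx Δ + Complex.I • 1

/-- The Cayley transform `C(hΔ) = (hΔ − iI)(hΔ + iI)⁻¹` of a scaled matrix. -/
def cayleyOp {n : ℕ} (Δ : Matrix (Fin n) (Fin n) ℝ) (hz : ℝ) : Matrix (Fin n) (Fin n) ℂ :=
  cayleyNum Δ hz * (cayleyDen Δ hz)⁻¹

/-- Cayley filter `g_{c,h}(Δ) = c₀ I + 2 Re { Σ_{j=1}^r c_j (hΔ−iI)^j (hΔ+iI)^{−j} }`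
(entrywise real part). -/
def cayleyFilter {n : ℕ} (Δ : Matrix (Fin n) (Fin n) ℝ) (hz : ℝ) (r : ℕ)
    (c₀ : ℝ) (c : ℕ → ℂ) : Matrix (Fin n) (Fin n) ℝ :=
  c₀ • (1 : Matrix (Fin n) (Fin n) ℝ) +
    (2 : ℝ) • (∑ j ∈ Finset.Icc 1 r,
      c j • (cayleyNum Δ hz ^ j * ((cayleyDen Δ hz)⁻¹) ^ j)).map Complex.re

/-- Euclidean (`L₂`) norm of a finite signal. -/
def l2norm {n : ℕ} {𝕜 : Type*} [RCLike 𝕜] (v : Fin n → 𝕜) : ℝ :=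
  Real.sqrt (∑ i, ‖v i‖ ^ 2)

/-- Operator norm induced by the Euclidean norm. -/
def l2opNorm {n : ℕ} (A : Matrix (Fin n) (Fin n) ℂ) : ℝ :=
  sSup {t : ℝ | ∃ x : Fin n → ℂ, l2norm x = 1 ∧ t = l2norm (A *ᵥ x)}

/-- Maximum-row-sum norm `‖A‖_∞ = max_i Σ_k |a_{ik}|`. -/
def rowSumNorm {n : ℕ} (A : Matrix (Fin n) (Fin n) ℂ) : ℝ :=
  sSup (Set.range fun i => ∑ k, ‖A i k‖)

/-- Diagonal part `Diag(A)` of a matrix. -/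
def diagPart {n : ℕ} (A : Matrix (Fin n) (Fin n) ℂ) : Matrix (Fin n) (Fin n) ℂ :=
  Matrix.diagonal fun i => A i i

/-- Off-diagonal part `Off(A) = A − Diag(A)` of a matrix. -/
def offPart {n : ℕ} (A : Matrix (Fin n) (Fin n) ℂ) : Matrix (Fin n) (Fin n) ℂ :=
  A - diagPart A

/-- Jacobi iteration matrix `J = −Diag(A)⁻¹ Off(A)`. -/
def jacobiMatrix {n : ℕ} (A : Matrix (Fin n) (Fin n) ℂ) : Matrix (Fin n) (Fin n) ℂ :=
  -((diagPart A)⁻¹ * offPart A)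

/-- Jacobi iterations `x^{(k+1)} = J x^{(k)} + b`, initialized at `x^{(0)} = b`. -/
def jacobiIter {n : ℕ} (J : Matrix (Fin n) (Fin n) ℂ) (b : Fin n → ℂ) : ℕ → (Fin n → ℂ)
  | 0 => b
  | (k+1) => J *ᵥ jacobiIter J b k + b

/-- The Jacobi approximation scheme: `ỹ₀ = f` and, for `j ≥ 1`, `ỹ_j` is the result of `K`
Jacobi iterations for the system `(hΔ+iI) y = (hΔ−iI) ỹ_{j-1}`, initialized at
`b_j = Diag(hΔ+iI)⁻¹ (hΔ−iI) ỹ_{j-1}`. -/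
def jacobiScheme {n : ℕ} (Δ : Matrix (Fin n) (Fin n) ℝ) (hz : ℝ) (K : ℕ)
    (f : Fin n → ℝ) : ℕ → (Fin n → ℂ)
  | 0 => fun i => (f i : ℂ)
  | (j+1) =>
      jacobiIter (jacobiMatrix (cayleyDen Δ hz))
        ((diagPart (cayleyDen Δ hz))⁻¹ *ᵥ (cayleyNum Δ hz *ᵥ jacobiScheme Δ hz K f j)) K

/-- The normalized Jacobi approximation scheme: as `jacobiScheme`, but each `ỹ_j` (`j ≥ 1`)
is rescaled so that `‖ỹ_j‖₂ = ‖f‖₂`. -/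
def jacobiSchemeN {n : ℕ} (Δ : Matrix (Fin n) (Fin n) ℝ) (hz : ℝ) (K : ℕ)
    (f : Fin n → ℝ) : ℕ → (Fin n → ℂ)
  | 0 => fun i => (f i : ℂ)
  | (j+1) =>
      let y := jacobiIter (jacobiMatrix (cayleyDen Δ hz))
        ((diagPart (cayleyDen Δ hz))⁻¹ *ᵥ (cayleyNum Δ hz *ᵥ jacobiSchemeN Δ hz K f j)) K
      (l2norm f / l2norm y) • y

/-- Approximate Cayley filter output `G̃f = c₀ ỹ₀ + 2 Re Σ_{j=1}^r c_j ỹ_j` (Jacobi scheme). -/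
def approxCayley {n : ℕ} (Δ : Matrix (Fin n) (Fin n) ℝ) (hz : ℝ) (r : ℕ)
    (c₀ : ℝ) (c : ℕ → ℂ) (K : ℕ) (f : Fin n → ℝ) : Fin n → ℝ :=
  fun i => c₀ * f i + 2 * (∑ j ∈ Finset.Icc 1 r, c j * jacobiScheme Δ hz K f j i).re

/-- Approximate Cayley filter output for the normalized Jacobi scheme. -/
def approxCayleyN {n : ℕ} (Δ : Matrix (Fin n) (Fin n) ℝ) (hz : ℝ) (r : ℕ)
    (c₀ : ℝ) (c : ℕ → ℂ) (K : ℕ) (f : Fin n → ℝ) : Fin n → ℝ :=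
  fun i => c₀ * f i + 2 * (∑ j ∈ Finset.Icc 1 r, c j * jacobiSchemeN Δ hz K f j i).re

/-- `k`-hop neighborhood of vertex `m` w.r.t. an adjacency relation `A`: all vertices reachable
from `m` by a path of at most `k` edges. -/
def khop {n : ℕ} (A : Fin n → Fin n → Prop) : ℕ → Fin n → Set (Fin n)
  | 0, m => {m}
  | (k+1), m => khop A k m ∪ {l | ∃ v ∈ khop A k m, A v l}

/-- Delta signal at vertex `m`. -/
def deltaSig {n : ℕ} (m : Fin n) : Fin n → ℝ :=
  fun i => if i = m then 1 else 0

/-! On a `d`-regular graph the diagonal of `hΔ + iI` is the scalar `hd + i`, so with no Jacobi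
iterations every step of the scheme is multiplication by `p(Δ)`, where `p = (hd + i)⁻¹ (hX − i)`
is affine with nonzero leading coefficient. Hence `ỹ_j = p(Δ)^j f`, and the filter output is the
real part of `Q(Δ) f` for the complex polynomial `Q = c₀ + Σ_{j=1}^r 2 c_j p^j`; since `Δ` and `f`
are real, this is `(Re Q)(Δ) f`, with `deg (Re Q) ≤ deg Q ≤ r`. Conversely, `p` being an invertible
affine change of variable, every `q ∈ ℝ[X]` of degree `≤ r` is `s ∘ p` for some `s ∈ ℂ[X]` of
degree `≤ r`, i.e. `q = Σ_{j=0}^r s_j p^j`, and `c₀ = Re s₀`, `c_j = s_j / 2` realize it. -/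

namespace Polynomial

def re (Q : ℂ[X]) : ℝ[X] :=
  ⟨AddMonoidAlgebra.ofCoeff (Q.toFinsupp.coeff.mapRange Complex.re Complex.zero_re)⟩

@[simp]
theorem coeff_re (Q : ℂ[X]) (k : ℕ) : Q.re.coeff k = (Q.coeff k).re := rfl

theorem re_add (P Q : ℂ[X]) : (P + Q).re = P.re + Q.re := by
  ext k; simp

theorem re_C (z : ℂ) : (C z).re = C z.re := by
  ext k; simp [coeff_C]; split <;> simp

theorem re_monomial (k : ℕ) (z : ℂ) : (monomial k z).re = monomial k z.re := by
  ext m; simp [coeff_monomial]; split <;> simp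

theorem re_map_ofReal (q : ℝ[X]) : (q.map Complex.ofRealHom).re = q := by
  ext k; simp

theorem natDegree_re_le (Q : ℂ[X]) : Q.re.natDegree ≤ Q.natDegree := by
  rw [natDegree_le_iff_coeff_eq_zero]
  intro k hk
  simp [coeff_eq_zero_of_natDegree_lt hk]

end Polynomial

open Polynomial

theorem ofReal_add_I_ne_zero (x : ℝ) : (x : ℂ) + Complex.I ≠ 0 := fun h => by
  simpa using congrArg Complex.im h

def cayleyStepPoly (hz d : ℝ) : ℂ[X] :=
  C (((hz * d : ℝ) : ℂ) + Complex.I)⁻¹ * (C (hz : ℂ) * X - C Complex.I)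

theorem natDegree_cayleyStepPoly (d : ℝ) {hz : ℝ} (hz0 : hz ≠ 0) :
    (cayleyStepPoly hz d).natDegree = 1 := by
  rw [cayleyStepPoly, natDegree_C_mul (inv_ne_zero (ofReal_add_I_ne_zero _)), natDegree_sub_C,
    natDegree_C_mul_X _ (Complex.ofReal_ne_zero.mpr hz0)]

def cayleyFilterPoly (p : ℂ[X]) (r : ℕ) (c₀ : ℝ) (c : ℕ → ℂ) : ℂ[X] :=
  C (c₀ : ℂ) + ∑ j ∈ Icc 1 r, C (2 * c j) * p ^ j

theorem natDegree_cayleyFilterPoly_le {p : ℂ[X]} (hp : p.natDegree ≤ 1) (r : ℕ) (c₀ : ℝ)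
    (c : ℕ → ℂ) : (cayleyFilterPoly p r c₀ c).natDegree ≤ r := by
  refine natDegree_add_le_of_degree_le (by simp) ?_
  refine natDegree_sum_le_of_forall_le _ _ fun j hj => (natDegree_C_mul_le _ _).trans ?_
  calc (p ^ j).natDegree ≤ j * 1 := natDegree_pow_le_of_le j hp
    _ ≤ r := by simpa using (mem_Icc.mp hj).2

theorem exists_re_cayleyFilterPoly_eq {p : ℂ[X]} (hp : p.natDegree = 1) {r : ℕ} {q : ℝ[X]}
    (hq : q.natDegree ≤ r) : ∃ (c₀ : ℝ) (c : ℕ → ℂ), (cayleyFilterPoly p r c₀ c).re = q := by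
  have hlead : p.coeff 1 ≠ 0 := by
    rw [← hp]
    exact leadingCoeff_ne_zero.mpr (by rintro rfl; simp at hp)
  set u : ℂ[X] := C (p.coeff 1)⁻¹ * (X - C (p.coeff 0))
  have hu : u.comp p = X := by
    conv_lhs => rw [eq_X_add_C_of_natDegree_le_one hp.le]
    simp [u, ← mul_assoc, ← C_mul, hlead]
  set s := (q.map Complex.ofRealHom).comp u
  have hs : s.comp p = q.map Complex.ofRealHom := by rw [comp_assoc, hu, comp_X]
  have hsdeg : s.natDegree < r + 1 := by
    calc s.natDegree ≤ (q.map Complex.ofRealHom).natDegree * u.natDegree := natDegree_comp_le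
      _ ≤ r * 1 := by
        rw [natDegree_map]
        exact Nat.mul_le_mul hq ((natDegree_C_mul_le _ _).trans (natDegree_X_sub_C _).le)
      _ < r + 1 := by omega
  have hexp : s.comp p = ∑ j ∈ Ioc 0 r, C (s.coeff j) * p ^ j + C (s.coeff 0) := by
    rw [comp_eq_sum_left, sum_over_range' _ (by simp) _ hsdeg, Nat.range_succ_eq_Icc_zero,
      ← sum_Ioc_add_eq_sum_Icc (Nat.zero_le r), pow_zero, mul_one]
  refine ⟨(s.coeff 0).re, fun j => s.coeff j / 2, ?_⟩
  rw [← re_map_ofReal q, ← hs, hexp, cayleyFilterPoly, re_add, re_add, re_C, re_C, add_comm]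
  congr 2
  exact sum_congr rfl fun j _ => by rw [mul_div_cancel₀ _ two_ne_zero]

section

variable {n : ℕ}

theorem cplx_pow_mulVec_ofReal (A : Matrix (Fin n) (Fin n) ℝ) (f : Fin n → ℝ) (k : ℕ) :
    cplx A ^ k *ᵥ (fun i => (f i : ℂ)) = fun i => ((A ^ k *ᵥ f) i : ℂ) := by
  funext i
  have h := RingHom.map_mulVec Complex.ofRealHom (A ^ k) f i
  rw [← RingHom.mapMatrix_apply, map_pow] at h
  exact h.symm

theorem re_aeval_cplx_mulVec (A : Matrix (Fin n) (Fin n) ℝ) (f : Fin n → ℝ) (Q : ℂ[X]) :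
    (fun i => ((aeval (cplx A) Q *ᵥ fun i => (f i : ℂ)) i).re) = aeval A Q.re *ᵥ f := by
  induction Q using Polynomial.induction_on' with
  | add P Q hP hQ =>
    funext i
    simp only [map_add, add_mulVec, Pi.add_apply, Complex.add_re, re_add, ← hP, ← hQ]
  | monomial k z =>
    funext i
    simp [re_monomial, aeval_monomial, Algebra.algebraMap_eq_smul_one, smul_mulVec,
      cplx_pow_mulVec_ofReal, Complex.mul_re]

theorem aeval_cplx_cayleyStepPoly (Δ : Matrix (Fin n) (Fin n) ℝ) (hz d : ℝ) :
    aeval (cplx Δ) (cayleyStepPoly hz d)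
      = (((hz * d : ℝ) : ℂ) + Complex.I)⁻¹ • cayleyNum Δ hz := by
  simp [cayleyStepPoly, cayleyNum, Algebra.algebraMap_eq_smul_one]

theorem unLaplacian_apply_self {W : Matrix (Fin n) (Fin n) ℝ} (hdiag : ∀ i, W i i = 0)
    {d : ℝ} (hreg : ∀ i, gDegree W i = d) (i : Fin n) : unLaplacian W i i = d := by
  simp [unLaplacian, hdiag, hreg]

theorem diagPart_cayleyDen {Δ : Matrix (Fin n) (Fin n) ℝ} {d : ℝ} (hΔ : ∀ i, Δ i i = d)
    (hz : ℝ) : diagPart (cayleyDen Δ hz) = (((hz * d : ℝ) : ℂ) + Complex.I) • 1 := by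
  ext i j
  rcases eq_or_ne i j with rfl | hij
  · simp [diagPart, cayleyDen, cplx, hΔ]
  · simp [diagPart, hij]

theorem jacobiScheme_zero_iterations {Δ : Matrix (Fin n) (Fin n) ℝ} {d : ℝ}
    (hΔ : ∀ i, Δ i i = d) (hz : ℝ) (f : Fin n → ℝ) (j : ℕ) :
    jacobiScheme Δ hz 0 f j
      = ((((hz * d : ℝ) : ℂ) + Complex.I)⁻¹ • cayleyNum Δ hz) ^ j *ᵥ fun i => (f i : ℂ) := by
  have hinv : (diagPart (cayleyDen Δ hz))⁻¹ = (((hz * d : ℝ) : ℂ) + Complex.I)⁻¹ • 1 := by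
    rw [diagPart_cayleyDen hΔ]
    refine Matrix.inv_eq_right_inv ?_
    rw [smul_mul_smul_comm, mul_inv_cancel₀ (ofReal_add_I_ne_zero _), one_mul, one_smul]
  induction j with
  | zero => simp [jacobiScheme]
  | succ j ih =>
    change (diagPart (cayleyDen Δ hz))⁻¹ *ᵥ (cayleyNum Δ hz *ᵥ jacobiScheme Δ hz 0 f j) = _
    rw [ih, hinv, pow_succ', ← mulVec_mulVec, smul_mulVec, smul_mulVec, one_mulVec]

theorem approxCayley_eq_aeval_re {Δ : Matrix (Fin n) (Fin n) ℝ} {hz : ℝ} {K : ℕ}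
    {p : ℂ[X]}
    (hy : ∀ f j, jacobiScheme Δ hz K f j = aeval (cplx Δ) p ^ j *ᵥ fun i => (f i : ℂ))
    (r : ℕ) (c₀ : ℝ) (c : ℕ → ℂ) (f : Fin n → ℝ) :
    approxCayley Δ hz r c₀ c K f = aeval Δ (cayleyFilterPoly p r c₀ c).re *ᵥ f := by
  rw [← re_aeval_cplx_mulVec]
  funext i
  have haeval : (aeval (cplx Δ) (cayleyFilterPoly p r c₀ c) *ᵥ fun i => (f i : ℂ)) i
      = c₀ * f i + 2 * ∑ j ∈ Icc 1 r, c j * jacobiScheme Δ hz K f j i := by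
    simp [cayleyFilterPoly, hy, add_mulVec, sum_mulVec, smul_mulVec,
      Algebra.algebraMap_eq_smul_one, mul_sum, mul_left_comm]
  rw [haeval]
  simp [approxCayley]

end

theorem approxCayley_zero_iterations_polynomial_general {n : ℕ} (W : Matrix (Fin n) (Fin n) ℝ)
    (hdiag : ∀ i, W i i = 0)
    (d : ℝ) (hreg : ∀ i, gDegree W i = d)
    (hz : ℝ) (hhz : 0 < hz) (r : ℕ) :
    (∀ (f : Fin n → ℝ) (j : ℕ), j ≤ r →
      jacobiScheme (unLaplacian W) hz 0 f j
        = ((((hz * d : ℝ) : ℂ) + Complex.I)⁻¹ • cayleyNum (unLaplacian W) hz) ^ j *ᵥ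
            fun i => (f i : ℂ)) ∧
    (∀ (c₀ : ℝ) (c : ℕ → ℂ), ∃ q : Polynomial ℝ, q.natDegree ≤ r ∧
      ∀ f : Fin n → ℝ,
        approxCayley (unLaplacian W) hz r c₀ c 0 f = Polynomial.aeval (unLaplacian W) q *ᵥ f) ∧
    (∀ q : Polynomial ℝ, q.natDegree ≤ r → ∃ (c₀ : ℝ) (c : ℕ → ℂ),
      ∀ f : Fin n → ℝ,
        approxCayley (unLaplacian W) hz r c₀ c 0 f = Polynomial.aeval (unLaplacian W) q *ᵥ f) := by
  have hΔ := unLaplacian_apply_self hdiag hreg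
  have hy : ∀ f j, jacobiScheme (unLaplacian W) hz 0 f j
      = aeval (cplx (unLaplacian W)) (cayleyStepPoly hz d) ^ j *ᵥ fun i => (f i : ℂ) := by
    simpa only [aeval_cplx_cayleyStepPoly] using jacobiScheme_zero_iterations hΔ hz
  have hp := natDegree_cayleyStepPoly d hhz.ne'
  refine ⟨fun f j _ => jacobiScheme_zero_iterations hΔ hz f j,
    fun c₀ c => ⟨_, (natDegree_re_le _).trans (natDegree_cayleyFilterPoly_le hp.le r c₀ c),
      approxCayley_eq_aeval_re hy r c₀ c⟩,
    fun q hq => ?_⟩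
  obtain ⟨c₀, c, hqc⟩ := exists_re_cayleyFilterPoly_eq hp hq
  exact ⟨c₀, c, fun f => by rw [approxCayley_eq_aeval_re hy, hqc]⟩

/-- For a `d`-regular graph and zero Jacobi iterations (`K = 0`):
`ỹ_j = ((hd + i)⁻¹ (hΔ − iI))^j f`; the approximate Cayley filter is a real polynomial in `Δ`
of degree at most `r`; and every real polynomial of `Δ` of degree at most `r` (such as a
Chebyshev filter) arises as such a zero-iteration Cayley filter. -/
theorem approxCayley_zero_iterations_polynomial {n : ℕ} (W : Matrix (Fin n) (Fin n) ℝ)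
    (hsym : W.IsSymm) (hnn : ∀ i j, 0 ≤ W i j) (hdiag : ∀ i, W i i = 0)
    (d : ℝ) (hreg : ∀ i, gDegree W i = d)
    (hz : ℝ) (hhz : 0 < hz) (r : ℕ) :
    (∀ (f : Fin n → ℝ) (j : ℕ), j ≤ r →
      jacobiScheme (unLaplacian W) hz 0 f j
        = ((((hz * d : ℝ) : ℂ) + Complex.I)⁻¹ • cayleyNum (unLaplacian W) hz) ^ j *ᵥ
            fun i => (f i : ℂ)) ∧
    (∀ (c₀ : ℝ) (c : ℕ → ℂ), ∃ q : Polynomial ℝ, q.natDegree ≤ r ∧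
      ∀ f : Fin n → ℝ,
        approxCayley (unLaplacian W) hz r c₀ c 0 f = Polynomial.aeval (unLaplacian W) q *ᵥ f) ∧
    (∀ q : Polynomial ℝ, q.natDegree ≤ r → ∃ (c₀ : ℝ) (c : ℕ → ℂ),
      ∀ f : Fin n → ℝ,
        approxCayley (unLaplacian W) hz r c₀ c 0 f = Polynomial.aeval (unLaplacian W) q *ᵥ f) :=
  approxCayley_zero_iterations_polynomial_general W hdiag d hreg hz hhz r

end
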